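/- Let φ be a bounded continuous solution of Lφ = μφ − φ² (L convolution with an even positive integrable kernel, Lc = c for constants) with μ < 1. Then either φ ≡ 0, or φ ≡ μ − 1, or μ − 1 < φ(x) < 1 for all x. -/

import Mathlib

/-!
Let `m = inf φ`. Averaging against the probability kernel `K` gives
`m ≤ Lφ = μφ - φ²` pointwise, hence `m ≤ μm - m²` in the limit, i.e. `μ - 1 ≤ m ≤ 0`.
Then `μ - 1 ≤ μφ - φ²`, which confines `φ` to `[μ - 1, 1]`. If `φ` touches either end
at `x₀`, the equation gives `∫ K(x₀ - y)(φ y - (μ - 1)) dy = 0` with a nonnegative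
integrand; as `K > 0` and `φ` is continuous, `φ ≡ μ - 1`.
-/

open MeasureTheory Set

theorem le_apply_csInf_range {α : Type*} [Nonempty α] {f : α → ℝ} {g : ℝ → ℝ} {c : ℝ}
    (hf : BddBelow (range f)) (hg : Continuous g) (hcg : ∀ x, c ≤ g (f x)) :
    c ≤ g (sInf (range f)) := by
  have hclosed : IsClosed {t | c ≤ g t} := isClosed_le continuous_const hg
  have hrange : range f ⊆ {t | c ≤ g t} := range_subset_iff.mpr hcg
  exact hclosed.closure_subset_iff.mpr hrange (csInf_mem_closure (range_nonempty f) hf)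

theorem sub_one_le_of_le_mul_sub_sq {μ m : ℝ} (hμ : μ ≤ 1) (hm : m ≤ μ * m - m ^ 2) :
    μ - 1 ≤ m := by
  nlinarith

theorem mem_Icc_of_sub_one_le_mul_sub_sq {μ t : ℝ} (hμ : μ ≤ 2)
    (ht : μ - 1 ≤ μ * t - t ^ 2) : t ∈ Icc (μ - 1) 1 := by
  have hprod : (t - (μ - 1)) * (t - 1) ≤ 0 := by nlinarith
  constructor <;> nlinarith

theorem eq_zero_of_integral_mul_eq_zero {X : Type*} [TopologicalSpace X] [MeasurableSpace X]
    {ν : Measure X} [ν.IsOpenPosMeasure] {w ψ : X → ℝ} (hw : ∀ x, 0 < w x)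
    (hψ : Continuous ψ) (hψ_nonneg : 0 ≤ ψ) (hint : Integrable (fun x => w x * ψ x) ν)
    (hzero : ∫ x, w x * ψ x ∂ν = 0) : ψ = 0 := by
  have hprod : (fun x => w x * ψ x) =ᵐ[ν] 0 :=
    (integral_eq_zero_iff_of_nonneg (fun x => mul_nonneg (hw x).le (hψ_nonneg x)) hint).mp hzero
  have hψ_ae : ψ =ᵐ[ν] 0 := hprod.mono fun x hx => by
    simpa [(hw x).ne'] using hx
  exact (hψ.ae_eq_iff_eq ν continuous_const).mp hψ_ae

section Averaging

variable {K : ℝ → ℝ}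

theorem integral_comp_sub_mul_const (hK1 : ∫ x, K x = 1) (x c : ℝ) :
    ∫ y, K (x - y) * c = c := by
  rw [integral_mul_const, integral_sub_left_eq_self K volume x, hK1, one_mul]

theorem integrable_comp_sub_mul_of_abs_le (hKint : Integrable K) {φ : ℝ → ℝ}
    (hφ : AEStronglyMeasurable φ) {M : ℝ} (hM : ∀ y, |φ y| ≤ M) (x : ℝ) :
    Integrable (fun y => K (x - y) * φ y) :=
  (hKint.comp_sub_left x).mul_bdd hφ (Filter.Eventually.of_forall hM)

theorem integrable_comp_sub_mul_sub_const (hKint : Integrable K) {φ : ℝ → ℝ} {x : ℝ}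
    (hφ : Integrable fun y => K (x - y) * φ y) (c : ℝ) :
    Integrable fun y => K (x - y) * (φ y - c) := by
  simp only [mul_sub]
  exact hφ.sub ((hKint.comp_sub_left x).mul_const c)

theorem integral_comp_sub_mul_sub_const (hKint : Integrable K) (hK1 : ∫ x, K x = 1)
    {φ : ℝ → ℝ} {x : ℝ} (hφ : Integrable fun y => K (x - y) * φ y) (c : ℝ) :
    ∫ y, K (x - y) * (φ y - c) = (∫ y, K (x - y) * φ y) - c := by
  simp only [mul_sub]
  rw [integral_sub hφ ((hKint.comp_sub_left x).mul_const c),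
    integral_comp_sub_mul_const hK1]

theorem le_integral_comp_sub_mul (hKpos : ∀ x, 0 < K x) (hKint : Integrable K)
    (hK1 : ∫ x, K x = 1) {φ : ℝ → ℝ} {x m : ℝ} (hφ : Integrable fun y => K (x - y) * φ y)
    (hm : ∀ y, m ≤ φ y) : m ≤ ∫ y, K (x - y) * φ y :=
  calc m = ∫ y, K (x - y) * m := (integral_comp_sub_mul_const hK1 x m).symm
    _ ≤ ∫ y, K (x - y) * φ y :=
      integral_mono ((hKint.comp_sub_left x).mul_const m) hφ fun y =>
        mul_le_mul_of_nonneg_left (hm y) (hKpos _).le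

end Averaging

theorem whitham_solution_bounds (K : ℝ → ℝ) (μ : ℝ) (hμ : μ < 1)
    (hKpos : ∀ x, 0 < K x)
    (hKint : MeasureTheory.Integrable K) (hK1 : (∫ x, K x) = 1)
    (φ : ℝ → ℝ) (hc : Continuous φ) (hb : ∃ M, ∀ x, |φ x| ≤ M)
    (heq : ∀ x, (∫ y, K (x-y) * φ y) = μ * φ x - φ x ^ 2) :
    (∀ x, φ x = 0) ∨ (∀ x, φ x = μ - 1) ∨ (∀ x, μ - 1 < φ x ∧ φ x < 1) := by
  obtain ⟨M, hM⟩ := hb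
  have hint := integrable_comp_sub_mul_of_abs_le hKint hc.aestronglyMeasurable hM
  have hbdd : BddBelow (range φ) := ⟨-M, forall_mem_range.mpr fun x => neg_le_of_abs_le (hM x)⟩
  have hlow : ∀ x, sInf (range φ) ≤ μ * φ x - φ x ^ 2 := fun x =>
    heq x ▸ le_integral_comp_sub_mul hKpos hKint hK1 (hint x) fun y => csInf_le hbdd ⟨y, rfl⟩
  have hinf : μ - 1 ≤ sInf (range φ) := sub_one_le_of_le_mul_sub_sq hμ.le <|
    le_apply_csInf_range hbdd (g := fun t => μ * t - t ^ 2) (by fun_prop) hlow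
  have hIcc : ∀ x, φ x ∈ Icc (μ - 1) 1 := fun x =>
    mem_Icc_of_sub_one_le_mul_sub_sq (by linarith) (hinf.trans (hlow x))
  by_cases htouch : ∃ x₀, φ x₀ = μ - 1 ∨ φ x₀ = 1
  · obtain ⟨x₀, hx₀⟩ := htouch
    have hzero : ∫ y, K (x₀ - y) * (φ y - (μ - 1)) = 0 := by
      rw [integral_comp_sub_mul_sub_const hKint hK1 (hint x₀), heq x₀]
      rcases hx₀ with h | h <;> rw [h] <;> ring
    have hφ_sub := eq_zero_of_integral_mul_eq_zero (ν := volume) (fun y => hKpos (x₀ - y))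
      (hc.sub continuous_const) (fun y => sub_nonneg.mpr (hIcc y).1)
      (integrable_comp_sub_mul_sub_const hKint (hint x₀) (μ - 1)) hzero
    exact Or.inr (Or.inl fun x => sub_eq_zero.mp (congrFun hφ_sub x))
  · push Not at htouch
    exact Or.inr (Or.inr fun x =>
      ⟨(hIcc x).1.lt_of_ne (htouch x).1.symm, (hIcc x).2.lt_of_ne (htouch x).2⟩)
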